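/- arXiv:2106.09099 — 3 statements merged into one kernel-verified Lean document; each statement's English description precedes it below -/
import Mathlib

section
/- Let 0 < c₁ < c₂ < A and ζ = (c₂ - c₁)/(A - c₁). Given real numbers a₁, …, a_{N₀} with aⱼ ≤ A for each 1 ≤ j ≤ N₀ and ∑_{j=1}^{N₀} aⱼ ≥ c₂·N₀, there exist an integer l > ζ·N₀ and indices 1 ≤ n₁ < n₂ < ⋯ < n_l ≤ N₀ such that ∑_{j=n+1}^{nᵢ} aⱼ ≥ c₁·(nᵢ − n) for every 0 ≤ n < nᵢ and every i = 1, …, l. -/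
/-!
Put `s n = ∑_{j ≤ n} (a j - c₁)`; its increments are at most `K = A - c₁`, and
`s N₀ ≥ (c₂ - c₁) N₀`. Call `m` a hyperbolic time if `s m ≥ s n` for all `n < m`, i.e.
`∑_{n < j ≤ m} a j ≥ c₁ (m - n)` for all `n < m`. The running maximum of `s` can only increase at
hyperbolic times, and then by at most `K`, so `s N₀ ≤ K · #{hyperbolic times}`, strictly unless
every time is hyperbolic. Hence there are more than `(c₂ - c₁) N₀ / K` of them.
-/

open Finset

def IsHyperbolicTime (s : ℕ → ℝ) (m : ℕ) : Prop :=
  ∀ n < m, s n ≤ s m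

noncomputable instance (s : ℕ → ℝ) : DecidablePred (IsHyperbolicTime s) :=
  Classical.decPred _

noncomputable def hyperbolicTimes (s : ℕ → ℝ) (N : ℕ) : Finset ℕ :=
  {m ∈ Icc 1 N | IsHyperbolicTime s m}

section HyperbolicTimes

variable {s : ℕ → ℝ} {K : ℝ} {N : ℕ}

lemma card_hyperbolicTimes_le (s : ℕ → ℝ) (N : ℕ) : #(hyperbolicTimes s N) ≤ N :=
  (card_filter_le _ _).trans (by simp)

lemma card_hyperbolicTimes_succ (s : ℕ → ℝ) (N : ℕ) :
    #(hyperbolicTimes s (N + 1)) =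
      #(hyperbolicTimes s N) + if IsHyperbolicTime s (N + 1) then 1 else 0 := by
  rw [hyperbolicTimes, ← insert_Icc_right_eq_Icc_add_one (by omega), filter_insert]
  split_ifs
  · exact card_insert_of_notMem (by simp)
  · rfl

lemma card_hyperbolicTimes_le_succ (s : ℕ → ℝ) (N : ℕ) :
    #(hyperbolicTimes s N) ≤ #(hyperbolicTimes s (N + 1)) := by
  rw [card_hyperbolicTimes_succ]
  exact Nat.le_add_right _ _

lemma exists_lt_of_not_isHyperbolicTime {m : ℕ} (h : ¬IsHyperbolicTime s m) :
    ∃ n < m, s m < s n := by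
  simpa [IsHyperbolicTime] using h

lemma le_add_mul_card_hyperbolicTimes (hK : 0 ≤ K) (hs : ∀ n < N, s (n + 1) ≤ s n + K) :
    ∀ n ≤ N, s n ≤ s 0 + K * #(hyperbolicTimes s N) := by
  induction N with
  | zero => intro n hn; simp [Nat.le_zero.mp hn, hyperbolicTimes]
  | succ N ih =>
    have ih := ih fun n hn => hs n (by omega)
    intro n hn
    rcases hn.lt_or_eq with hn | rfl
    · have := card_hyperbolicTimes_le_succ s N
      calc s n ≤ s 0 + K * #(hyperbolicTimes s N) := ih n (by omega)
        _ ≤ _ := by gcongr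
    by_cases hyp : IsHyperbolicTime s (N + 1)
    · rw [card_hyperbolicTimes_succ, if_pos hyp]
      have := ih N le_rfl
      have := hs N (by omega)
      push_cast
      linarith
    · obtain ⟨n, hn, hlt⟩ := exists_lt_of_not_isHyperbolicTime hyp
      rw [card_hyperbolicTimes_succ, if_neg hyp, add_zero]
      linarith [ih n (by omega)]

lemma lt_add_mul_card_hyperbolicTimes (hK : 0 ≤ K) (hs : ∀ n < N, s (n + 1) ≤ s n + K)
    (hcard : #(hyperbolicTimes s N) < N) : s N < s 0 + K * #(hyperbolicTimes s N) := by
  induction N with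
  | zero => omega
  | succ N ih =>
    have hs' : ∀ n < N, s (n + 1) ≤ s n + K := fun n hn => hs n (by omega)
    by_cases hyp : IsHyperbolicTime s (N + 1)
    · rw [card_hyperbolicTimes_succ, if_pos hyp] at hcard ⊢
      have := ih hs' (by omega)
      have := hs N (by omega)
      push_cast
      linarith
    · obtain ⟨n, hn, hlt⟩ := exists_lt_of_not_isHyperbolicTime hyp
      rw [card_hyperbolicTimes_succ, if_neg hyp, add_zero]
      linarith [le_add_mul_card_hyperbolicTimes hK hs' n (by omega)]

theorem div_mul_lt_card_hyperbolicTimes {δ : ℝ} (hK : 0 < K) (hδK : δ < K) (hN : 0 < N)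
    (hs : ∀ n < N, s (n + 1) ≤ s n + K) (hgrowth : δ * N ≤ s N - s 0) :
    δ / K * N < #(hyperbolicTimes s N) := by
  rw [div_mul_eq_mul_div, div_lt_iff₀ hK]
  rcases (card_hyperbolicTimes_le s N).lt_or_eq with hlt | heq
  · have := lt_add_mul_card_hyperbolicTimes hK.le hs hlt
    linarith
  · rw [heq]
    have : (0 : ℝ) < N := by exact_mod_cast hN
    nlinarith

end HyperbolicTimes

lemma mul_sub_le_sum_Icc_of_isHyperbolicTime {a : ℕ → ℝ} {c : ℝ} {m n : ℕ}
    (hm : IsHyperbolicTime (fun k => ∑ j ∈ Ioc 0 k, (a j - c)) m) (hn : n < m) :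
    c * ((m : ℝ) - n) ≤ ∑ j ∈ Icc (n + 1) m, a j := by
  have hsplit := sum_Ioc_consecutive (fun j => a j - c) (Nat.zero_le n) hn.le
  have htail : ∑ j ∈ Ioc n m, (a j - c) = ∑ j ∈ Ioc n m, a j - c * (m - n) := by
    rw [sum_sub_distrib, sum_const, Nat.card_Ioc, nsmul_eq_mul, Nat.cast_sub hn.le, mul_comm]
  rw [Icc_add_one_left_eq_Ioc]
  linarith [hm n hn]

lemma Finset.exists_strictMono_enum_from_one {α : Type*} [LinearOrder α] [Inhabited α]
    (t : Finset α) :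
    ∃ f : ℕ → α, (∀ i, 1 ≤ i → i ≤ #t → f i ∈ t) ∧
      (∀ i j, 1 ≤ i → i < j → j ≤ #t → f i < f j) := by
  let f : ℕ → α := fun i => if h : i - 1 < #t then t.orderEmbOfFin rfl ⟨i - 1, h⟩ else default
  refine ⟨f, fun i hi hit => ?_, fun i j hi hij hjt => ?_⟩
  · simp only [f, dif_pos (show i - 1 < #t by omega)]
    exact t.orderEmbOfFin_mem rfl _
  · simp only [f, dif_pos (show i - 1 < #t by omega), dif_pos (show j - 1 < #t by omega)]
    exact (t.orderEmbOfFin rfl).strictMono (Fin.mk_lt_mk.mpr (by omega))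

theorem pliss_lemma_general (A c₁ c₂ : ℝ) (h₁₂ : c₁ < c₂) (h₂A : c₂ < A)
    (N₀ : ℕ) (hN₀ : 1 ≤ N₀) (a : ℕ → ℝ)
    (hbd : ∀ j, 1 ≤ j → j ≤ N₀ → a j ≤ A)
    (hsum : c₂ * N₀ ≤ ∑ j ∈ Finset.Icc 1 N₀, a j) :
    ∃ (l : ℕ) (nseq : ℕ → ℕ),
      ((c₂ - c₁) / (A - c₁)) * N₀ < (l : ℝ) ∧
      (∀ i, 1 ≤ i → i ≤ l → 1 ≤ nseq i ∧ nseq i ≤ N₀) ∧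
      (∀ i j, 1 ≤ i → i < j → j ≤ l → nseq i < nseq j) ∧
      (∀ i, 1 ≤ i → i ≤ l → ∀ n, n < nseq i →
        c₁ * ((nseq i : ℝ) - n) ≤ ∑ j ∈ Finset.Icc (n + 1) (nseq i), a j) := by
  set s : ℕ → ℝ := fun k => ∑ j ∈ Ioc 0 k, (a j - c₁)
  have hs : ∀ n < N₀, s (n + 1) ≤ s n + (A - c₁) := fun n hn => by
    simp only [s, sum_Ioc_succ_top (Nat.zero_le n)]
    linarith [hbd (n + 1) (by omega) (by omega)]
  have hgrowth : (c₂ - c₁) * N₀ ≤ s N₀ - s 0 := by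
    have : s N₀ - s 0 = ∑ j ∈ Icc 1 N₀, a j - N₀ * c₁ := by
      simp [s, ← Icc_add_one_left_eq_Ioc, sum_sub_distrib]
    linarith
  obtain ⟨nseq, hmem, hmono⟩ := (hyperbolicTimes s N₀).exists_strictMono_enum_from_one
  have hyp : ∀ i, 1 ≤ i → i ≤ #(hyperbolicTimes s N₀) →
      nseq i ∈ Icc 1 N₀ ∧ IsHyperbolicTime s (nseq i) := fun i hi hil => by
    simpa [hyperbolicTimes] using hmem i hi hil
  refine ⟨_, nseq, div_mul_lt_card_hyperbolicTimes (by linarith) (by linarith) hN₀ hs hgrowth,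
    fun i hi hil => mem_Icc.mp (hyp i hi hil).1, hmono, fun i hi hil n hn => ?_⟩
  exact mul_sub_le_sum_Icc_of_isHyperbolicTime (hyp i hi hil).2 hn

/-- **Pliss Lemma.** -/
theorem pliss_lemma (A c₁ c₂ : ℝ) (hc₁ : 0 < c₁) (h₁₂ : c₁ < c₂) (h₂A : c₂ < A)
    (N₀ : ℕ) (hN₀ : 1 ≤ N₀) (a : ℕ → ℝ)
    (hbd : ∀ j, 1 ≤ j → j ≤ N₀ → a j ≤ A)
    (hsum : c₂ * N₀ ≤ ∑ j ∈ Finset.Icc 1 N₀, a j) :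
    ∃ (l : ℕ) (nseq : ℕ → ℕ),
      ((c₂ - c₁) / (A - c₁)) * N₀ < (l : ℝ) ∧
      (∀ i, 1 ≤ i → i ≤ l → 1 ≤ nseq i ∧ nseq i ≤ N₀) ∧
      (∀ i j, 1 ≤ i → i < j → j ≤ l → nseq i < nseq j) ∧
      (∀ i, 1 ≤ i → i ≤ l → ∀ n, n < nseq i →
        c₁ * ((nseq i : ℝ) - n) ≤ ∑ j ∈ Finset.Icc (n + 1) (nseq i), a j) :=
  pliss_lemma_general A c₁ c₂ h₁₂ h₂A N₀ hN₀ a hbd hsum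
end

section
/- Let T : Ω → Ω preserve an ergodic probability μ and let n₁ : Ω → ℕ be measurable and μ-integrable. With n_{i+1}(ω) = n_i(ω) + n₁(T^{n_i(ω)}(ω)), for μ-almost every ω the sequence of times satisfies lim_{i→∞} (n_{i+1}(ω) − n_i(ω))/n_i(ω) = 0. -/
open MeasureTheory Filter
open scoped ENNReal Topology

/-!
Since `T` preserves `μ`, the set `{m < g ∘ T^[m]}` has the measure of `{m < g}`, and these
measures sum to `∫⁻ g < ∞`; by Borel–Cantelli, almost surely `g (T^[m] ω) ≤ m` eventually.
Applied to `(K + 1) * n₁` for every `K`, this gives `n₁ (T^[m] ω) / m → 0` almost surely.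
The gap ratio at step `i` is this quotient at `m = N i ω`, and `N i ω ≥ i + 1 → ∞`.
-/

theorem lintegral_natCast_eq_tsum_measure_lt {Ω : Type*} [MeasurableSpace Ω] (μ : Measure Ω)
    {g : Ω → ℕ} (hg : Measurable g) :
    ∫⁻ ω, (g ω : ℝ≥0∞) ∂μ = ∑' m : ℕ, μ {ω | m < g ω} := by
  have hs : ∀ m : ℕ, MeasurableSet {ω | m < g ω} := fun m => hg measurableSet_Ioi
  have hcount : ∀ k : ℕ, (k : ℝ≥0∞) = ∑' m : ℕ, if m < k then 1 else 0 := fun k => by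
    rw [tsum_eq_sum (s := Finset.range k) fun m hm => if_neg (by simpa using hm),
      Finset.sum_ite_of_true fun m hm => Finset.mem_range.mp hm]
    simp
  calc ∫⁻ ω, (g ω : ℝ≥0∞) ∂μ
      = ∫⁻ ω, ∑' m : ℕ, {ω | m < g ω}.indicator 1 ω ∂μ := by
        simp only [Set.indicator_apply, Set.mem_ofPred_eq, Pi.one_apply, ← hcount]
    _ = ∑' m : ℕ, μ {ω | m < g ω} := by
        rw [lintegral_tsum fun m => (measurable_one.indicator (hs m)).aemeasurable]
        simp_rw [lintegral_indicator_one (hs _)]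

namespace MeasureTheory.MeasurePreserving

variable {Ω : Type*} [MeasurableSpace Ω] {μ : Measure Ω} {T : Ω → Ω} {g : Ω → ℕ}

theorem ae_eventually_apply_iterate_le (hT : MeasurePreserving T μ μ) (hg : Measurable g)
    (hfin : ∫⁻ ω, (g ω : ℝ≥0∞) ∂μ ≠ ∞) :
    ∀ᵐ ω ∂μ, ∀ᶠ m in atTop, g (T^[m] ω) ≤ m := by
  have hmeasure : ∀ m : ℕ, μ (T^[m] ⁻¹' {ω | m < g ω}) = μ {ω | m < g ω} := fun m =>
    (hT.iterate m).measure_preimage (hg measurableSet_Ioi).nullMeasurableSet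
  have hsum : ∑' m : ℕ, μ (T^[m] ⁻¹' {ω | m < g ω}) ≠ ∞ := by
    rwa [tsum_congr hmeasure, ← lintegral_natCast_eq_tsum_measure_lt μ hg]
  filter_upwards [ae_eventually_notMem hsum] with ω hω
  filter_upwards [hω] with m hm
  simpa using hm

theorem ae_tendsto_apply_iterate_div_atTop (hT : MeasurePreserving T μ μ) (hg : Measurable g)
    (hfin : ∫⁻ ω, (g ω : ℝ≥0∞) ∂μ ≠ ∞) :
    ∀ᵐ ω ∂μ, Tendsto (fun m : ℕ => (g (T^[m] ω) : ℝ) / m) atTop (𝓝 0) := by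
  have hK : ∀ K : ℕ, ∀ᵐ ω ∂μ, ∀ᶠ m in atTop, (K + 1) * g (T^[m] ω) ≤ m := fun K => by
    refine hT.ae_eventually_apply_iterate_le (g := fun ω => (K + 1) * g ω) (by fun_prop) ?_
    push_cast
    rw [lintegral_const_mul' _ _ (by finiteness)]
    exact ENNReal.mul_ne_top (by finiteness) hfin
  filter_upwards [ae_all_iff.mpr hK] with ω hω
  refine tendsto_order.mpr ⟨fun a ha => Eventually.of_forall fun m => ha.trans_le (by positivity),
    fun ε hε => ?_⟩
  obtain ⟨K, hKε⟩ := exists_nat_one_div_lt hε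
  filter_upwards [hω K, eventually_gt_atTop 0] with m hm hm0
  calc (g (T^[m] ω) : ℝ) / m ≤ 1 / (K + 1) := by
        rw [div_le_div_iff₀ (by positivity) (by positivity), one_mul, mul_comm]
        exact_mod_cast hm
    _ < ε := hKε

end MeasureTheory.MeasurePreserving

theorem nonlacunary_of_integrable_general
    {Ω : Type*} [MeasurableSpace Ω] (μ : Measure Ω)
    (T : Ω → Ω) (hT : MeasurePreserving T μ μ)
    (n₁ : Ω → ℕ) (hmeas : Measurable n₁) (hpos : ∀ ω, 1 ≤ n₁ ω)
    (hint : Integrable (fun ω => (n₁ ω : ℝ)) μ)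
    (N : ℕ → Ω → ℕ)
    (hN0 : ∀ ω, N 0 ω = n₁ ω)
    (hNsucc : ∀ i ω, N (i + 1) ω = N i ω + n₁ (T^[N i ω] ω)) :
    ∀ᵐ ω ∂μ, Tendsto
      (fun i => ((N (i + 1) ω : ℝ) - (N i ω : ℝ)) / (N i ω : ℝ)) atTop (nhds 0) := by
  have hfin : ∫⁻ ω, (n₁ ω : ℝ≥0∞) ∂μ ≠ ∞ := by
    simpa only [ENNReal.ofReal_natCast] using hint.lintegral_lt_top.ne
  filter_upwards [hT.ae_tendsto_apply_iterate_div_atTop hmeas hfin] with ω hω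
  have hN_ge : ∀ i, i + 1 ≤ N i ω := by
    intro i
    induction i with
    | zero => simpa [hN0] using hpos ω
    | succ i ih => linarith [hNsucc i ω, hpos (T^[N i ω] ω)]
  have hN_tendsto : Tendsto (fun i => N i ω) atTop atTop :=
    tendsto_atTop_mono hN_ge (tendsto_add_atTop_nat 1)
  refine (hω.comp hN_tendsto).congr fun i => ?_
  simp only [Function.comp_apply, hNsucc i ω, Nat.cast_add, add_sub_cancel_left]

/-- An integrable first-time function produces a nonlacunary (sublinear gap) sequence of
times along almost every orbit of an ergodic measure-preserving map. -/
theorem nonlacunary_of_integrable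
    {Ω : Type*} [MeasurableSpace Ω] (μ : Measure Ω) [IsProbabilityMeasure μ]
    (T : Ω → Ω) (hT : MeasurePreserving T μ μ) (herg : Ergodic T μ)
    (n₁ : Ω → ℕ) (hmeas : Measurable n₁) (hpos : ∀ ω, 1 ≤ n₁ ω)
    (hint : Integrable (fun ω => (n₁ ω : ℝ)) μ)
    (N : ℕ → Ω → ℕ)
    (hN0 : ∀ ω, N 0 ω = n₁ ω)
    (hNsucc : ∀ i ω, N (i + 1) ω = N i ω + n₁ (T^[N i ω] ω)) :
    ∀ᵐ ω ∂μ, Tendsto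
      (fun i => ((N (i + 1) ω : ℝ) - (N i ω : ℝ)) / (N i ω : ℝ)) atTop (nhds 0) :=
  nonlacunary_of_integrable_general μ T hT n₁ hmeas hpos hint N hN0 hNsucc
end

section
/- Let M be a compact metric space, f : M → M a continuous map with a transfer operator L(ψ)(x) = ∑_{y ∈ f^{−1}(x)} e^{φ(y)} ψ(y) for a continuous potential φ (with f a local homeomorphism of constant finite degree). If μ is a Borel probability measure with L*(μ) = λμ for some λ > 0, then the Jacobian of μ with respect to f equals λ·e^{−φ}, i.e., μ(f(A)) = ∫_A λ e^{−φ} dμ for every measurable A on which f is injective. -/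
/-!
Cut `M` into finitely many Borel pieces `Vᵢ` on which `f` is injective. Pulling `μ` back along
each `f|Vᵢ` and summing gives a finite measure `ν` with `∫ h dν = ∫ ∑_{f y = x} h y dμ(x)` for
every measurable `h ≥ 0`, so `e^φ ν` represents the dual transfer operator applied to `μ`.
The eigen-equation says that `e^φ ν` and `λ μ` agree on continuous functions, hence they are
equal as finite Borel measures; testing this equality on `1_A e^{-φ}` gives
`μ (f A) = ∫_A λ e^{-φ} dμ`.
-/

open MeasureTheory Set Function
open scoped ENNReal NNReal

theorem exists_fin_partition_subordinate_of_iUnion_eq_univ {α ι : Type*} [MeasurableSpace α]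
    [Finite ι] {W : ι → Set α} (hW : ∀ i, MeasurableSet (W i)) (hcover : ⋃ i, W i = univ) :
    ∃ (n : ℕ) (V : Fin n → Set α), (∀ k, MeasurableSet (V k)) ∧ Pairwise (Disjoint on V) ∧
      ⋃ k, V k = univ ∧ ∀ k, ∃ i, V k ⊆ W i := by
  obtain ⟨n, ⟨e⟩⟩ := Finite.exists_equiv_fin ι
  refine ⟨n, disjointed (W ∘ e.symm), fun k => ?_, disjoint_disjointed _, ?_,
    fun k => ⟨e.symm k, disjointed_subset _ k⟩⟩
  · rw [disjointed_eq_inter_compl]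
    exact (hW _).inter (.iInter fun j => .iInter fun _ => (hW _).compl)
  · rw [iUnion_disjointed, ← hcover]
    exact e.symm.surjective.iUnion_comp W

theorem Continuous.exists_fin_partition_measurableEmbedding {α β : Type*} [TopologicalSpace α]
    [PolishSpace α] [CompactSpace α] [MeasurableSpace α] [BorelSpace α] [TopologicalSpace β]
    [T2Space β] [MeasurableSpace β] [BorelSpace β] {f : α → β} (hf : Continuous f)
    (hloc : ∀ x, ∃ U, IsOpen U ∧ x ∈ U ∧ InjOn f U) :
    ∃ (n : ℕ) (V : Fin n → Set α), Pairwise (Disjoint on V) ∧ ⋃ k, V k = univ ∧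
      ∀ k, MeasurableEmbedding ((V k).domRestrict f) := by
  choose U hUopen hxU hUinj using hloc
  obtain ⟨t, ht⟩ := CompactSpace.elim_nhds_subcover U fun x => (hUopen x).mem_nhds (hxU x)
  obtain ⟨n, V, hV, hdisj, hcover, hsub⟩ :=
    exists_fin_partition_subordinate_of_iUnion_eq_univ (W := fun x : t => U x)
      (fun x => (hUopen x).measurableSet) (by simpa [iUnion_subtype] using ht)
  refine ⟨n, V, hdisj, hcover, fun k => ?_⟩
  obtain ⟨x, hx⟩ := hsub k
  exact ContinuousOn.measurableEmbedding (hV k) hf.continuousOn ((hUinj x).mono hx)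

section Fibers

variable {α β γ : Type*}

/- `extend (s.domRestrict f) (s.domRestrict h) 0` is `h` composed with the inverse of `f|s`,
extended by `0` off `f '' s`; in this form its measurability is
`MeasurableEmbedding.measurable_extend`. -/
theorem tsum_preimage_singleton_indicator_eq_extend {f : α → β} {s : Set α} (hs : InjOn f s)
    (h : α → ℝ≥0∞) (x : β) :
    ∑' y : f ⁻¹' {x}, s.indicator h y = extend (s.domRestrict f) (s.domRestrict h) 0 x := by
  by_cases hx : x ∈ f '' s
  · obtain ⟨a, ha, rfl⟩ := hx
    rw [show f a = s.domRestrict f ⟨a, ha⟩ from rfl, hs.injective.extend_apply,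
      tsum_eq_single ⟨a, rfl⟩ fun y hya => indicator_of_notMem (fun hy => hya ?_) h]
    · exact indicator_of_mem ha h
    · exact Subtype.ext (hs hy ha y.2)
  · rw [extend_apply' _ _ _ (by rwa [← mem_range, range_domRestrict])]
    exact ENNReal.tsum_eq_zero.2 fun y => indicator_of_notMem (fun hy => hx ⟨y, hy, y.2⟩) h

theorem MeasurableEmbedding.lintegral_extend_zero [MeasurableSpace β] [MeasurableSpace γ]
    {e : γ → β} (he : MeasurableEmbedding e) (g : γ → ℝ≥0∞) (μ : Measure β) :
    ∫⁻ x, extend e g 0 x ∂μ = ∫⁻ a, g a ∂μ.comap e := by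
  have hsupp : support (extend e g 0) ⊆ range e := fun x hx => by
    by_contra hxe
    exact hx (extend_apply' g (0 : β → ℝ≥0∞) x hxe)
  rw [← setLIntegral_eq_of_support_subset hsupp, ← he.map_comap, he.lintegral_map]
  simp only [he.injective.extend_apply]

theorem tsum_preimage_singleton_eq_sum_extend {ι : Type*} [Fintype ι] {f : α → β}
    {V : ι → Set α} (hdisj : Pairwise (Disjoint on V)) (hcover : ⋃ i, V i = univ)
    (hinj : ∀ i, InjOn f (V i)) (h : α → ℝ≥0∞) (x : β) :
    ∑' y : f ⁻¹' {x}, h y = ∑ i, extend ((V i).domRestrict f) ((V i).domRestrict h) 0 x := by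
  simp_rw [← tsum_preimage_singleton_indicator_eq_extend (hinj _),
    ← Summable.tsum_finsetSum fun _ _ => ENNReal.summable]
  refine tsum_congr fun y => ?_
  obtain ⟨i, hi⟩ := mem_iUnion.1 (hcover.symm ▸ mem_univ (y : α))
  rw [Finset.sum_eq_single i
    (fun j _ hji => indicator_of_notMem (disjoint_right.1 (hdisj hji) hi) h) (by simp),
    indicator_of_mem hi]

variable [MeasurableSpace α] [MeasurableSpace β] {ι : Type*} [Fintype ι] {f : α → β}
  {V : ι → Set α}

theorem measurable_tsum_preimage_singleton (hdisj : Pairwise (Disjoint on V))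
    (hcover : ⋃ i, V i = univ) (hemb : ∀ i, MeasurableEmbedding ((V i).domRestrict f))
    {h : α → ℝ≥0∞} (hh : Measurable h) :
    Measurable fun x => ∑' y : f ⁻¹' {x}, h y := by
  simp_rw [tsum_preimage_singleton_eq_sum_extend hdisj hcover
    (fun i => injOn_iff_injective.2 (hemb i).injective)]
  exact Finset.measurable_sum _ fun i _ =>
    (hemb i).measurable_extend (hh.comp measurable_subtype_coe) measurable_const

theorem exists_lintegral_eq_lintegral_tsum_preimage_singleton
    (hdisj : Pairwise (Disjoint on V)) (hcover : ⋃ i, V i = univ)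
    (hemb : ∀ i, MeasurableEmbedding ((V i).domRestrict f)) (μ : Measure β) [IsFiniteMeasure μ] :
    ∃ ν : Measure α, IsFiniteMeasure ν ∧
      ∀ h : α → ℝ≥0∞, Measurable h → ∫⁻ y, h y ∂ν = ∫⁻ x, ∑' y : f ⁻¹' {x}, h y ∂μ := by
  refine ⟨∑ i, (μ.comap ((V i).domRestrict f)).map (↑), inferInstance, fun h hh => ?_⟩
  have hext (i : ι) : Measurable (extend ((V i).domRestrict f) ((V i).domRestrict h) 0) :=
    (hemb i).measurable_extend (hh.comp measurable_subtype_coe) measurable_const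
  simp_rw [tsum_preimage_singleton_eq_sum_extend hdisj hcover
    (fun i => injOn_iff_injective.2 (hemb i).injective)]
  rw [lintegral_finsetSum_measure, lintegral_finsetSum _ fun i _ => hext i]
  simp_rw [lintegral_map hh measurable_subtype_coe, (hemb _).lintegral_extend_zero]
  rfl

end Fibers

theorem Set.Finite.tsum_ofReal {α : Type*} {s : Set α} (hs : s.Finite) {u : α → ℝ}
    (hu : ∀ y ∈ s, 0 ≤ u y) :
    ∑' y : s, ENNReal.ofReal (u y) = ENNReal.ofReal (∑ y ∈ hs.toFinset, u y) := by
  rw [ENNReal.ofReal_sum_of_nonneg fun y hy => hu y (hs.mem_toFinset.1 hy),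
    ← Finset.tsum_subtype', hs.coe_toFinset]

theorem withDensity_exp_eq_smul_of_integral_transfer_eq {α : Type*} [PseudoEMetricSpace α]
    [CompactSpace α] [MeasurableSpace α] [BorelSpace α] {f : α → α}
    (hfin : ∀ x, (f ⁻¹' {x}).Finite) {φ : α → ℝ} (hφ : Continuous φ) {μ ν : Measure α}
    [IsFiniteMeasure μ] [IsFiniteMeasure ν]
    (hmeas : ∀ h : α → ℝ≥0∞, Measurable h → Measurable fun x => ∑' y : f ⁻¹' {x}, h y)
    (hν : ∀ h : α → ℝ≥0∞, Measurable h → ∫⁻ y, h y ∂ν = ∫⁻ x, ∑' y : f ⁻¹' {x}, h y ∂μ)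
    {lam : ℝ} (heigen : ∀ ψ : α → ℝ, Continuous ψ →
      ∫ x, (∑ y ∈ (hfin x).toFinset, Real.exp (φ y) * ψ y) ∂μ = lam * ∫ x, ψ x ∂μ) :
    ν.withDensity (fun y => ENNReal.ofReal (Real.exp (φ y))) = ENNReal.ofReal lam • μ := by
  set ρ : α → ℝ≥0∞ := fun y => ENNReal.ofReal (Real.exp (φ y))
  have hρ : Measurable ρ := hφ.measurable.exp.ennreal_ofReal
  have : IsFiniteMeasure (ν.withDensity ρ) := by
    obtain ⟨C, hC⟩ := (isCompact_range hφ).bddAbove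
    refine isFiniteMeasure_withDensity (IsFiniteMeasure.lintegral_lt_top_of_bounded_to_ennreal ν
      ⟨(Real.exp C).toNNReal, fun y => ?_⟩).ne
    exact ENNReal.ofReal_le_ofReal (Real.exp_le_exp.2 (hC (mem_range_self y)))
  refine ext_of_forall_lintegral_eq_of_IsFiniteMeasure fun g => ?_
  set G : α → ℝ≥0∞ := fun x => ∑' y : f ⁻¹' {x}, ρ y * g y
  have hG (x : α) : G x = ENNReal.ofReal (∑ y ∈ (hfin x).toFinset, Real.exp (φ y) * g y) := by
    simp_rw [G, ρ, ← ENNReal.ofReal_coe_nnreal, ← ENNReal.ofReal_mul (Real.exp_pos _).le]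
    exact (hfin x).tsum_ofReal fun y _ => mul_nonneg (Real.exp_pos _).le (g y).coe_nonneg
  have hG_meas : Measurable G := hmeas _ (hρ.mul g.measurable_coe_ennreal_comp)
  have hG_lintegral : ∫⁻ y, g y ∂ν.withDensity ρ = ∫⁻ x, G x ∂μ := by
    rw [lintegral_withDensity_eq_lintegral_mul _ hρ g.measurable_coe_ennreal_comp]
    exact hν _ (hρ.mul g.measurable_coe_ennreal_comp)
  calc ∫⁻ y, g y ∂ν.withDensity ρ = ENNReal.ofReal (∫ x, (G x).toReal ∂μ) := by
        rw [integral_toReal hG_meas.aemeasurable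
          (ae_of_all _ fun x => (hG x).trans_lt ENNReal.ofReal_lt_top),
          ENNReal.ofReal_toReal (hG_lintegral ▸ (g.lintegral_lt_top_of_nnreal _).ne), hG_lintegral]
    _ = ENNReal.ofReal (lam * ∫ x, (g x : ℝ) ∂μ) := by
        simp_rw [hG, ENNReal.toReal_ofReal (Finset.sum_nonneg fun y _ =>
          mul_nonneg (Real.exp_pos _).le (g y).coe_nonneg)]
        rw [heigen _ (by fun_prop)]
    _ = ENNReal.ofReal lam * ∫⁻ x, g x ∂μ := by
        rw [ENNReal.ofReal_mul' (integral_nonneg fun x => (g x).coe_nonneg),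
          ← BoundedContinuousFunction.toReal_lintegral_coe_eq_integral,
          ENNReal.ofReal_toReal (g.lintegral_lt_top_of_nnreal _).ne]
    _ = ∫⁻ x, g x ∂(ENNReal.ofReal lam • μ) := by rw [lintegral_smul_measure, smul_eq_mul]

theorem measure_image_eq_of_withDensity_exp_eq_smul {α : Type*} [MeasurableSpace α]
    {f : α → α} {φ : α → ℝ} (hφ : Measurable φ) {μ ν : Measure α}
    (hν : ∀ h : α → ℝ≥0∞, Measurable h → ∫⁻ y, h y ∂ν = ∫⁻ x, ∑' y : f ⁻¹' {x}, h y ∂μ)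
    {lam : ℝ}
    (heq : ν.withDensity (fun y => ENNReal.ofReal (Real.exp (φ y))) = ENNReal.ofReal lam • μ)
    {A : Set α} (hA : MeasurableSet A) (hAemb : MeasurableEmbedding (A.domRestrict f)) :
    μ (f '' A) = ∫⁻ x in A, ENNReal.ofReal (lam * Real.exp (-φ x)) ∂μ := by
  set ψ : α → ℝ≥0∞ := fun x => ENNReal.ofReal (Real.exp (-φ x))
  have hψ : Measurable ψ := hφ.neg.exp.ennreal_ofReal
  have hρψ (y : α) : ENNReal.ofReal (Real.exp (φ y)) * A.indicator ψ y = A.indicator 1 y := by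
    by_cases hy : y ∈ A
    · rw [indicator_of_mem hy, indicator_of_mem hy, ← ENNReal.ofReal_mul (Real.exp_pos _).le,
        ← Real.exp_add, add_neg_cancel, Real.exp_zero, ENNReal.ofReal_one, Pi.one_apply]
    · simp [hy]
  calc μ (f '' A) = ∫⁻ x, ∑' y : f ⁻¹' {x}, A.indicator 1 y ∂μ := by
        simp_rw [tsum_preimage_singleton_indicator_eq_extend
          (injOn_iff_injective.2 hAemb.injective), hAemb.lintegral_extend_zero]
        simp [hAemb.comap_apply, range_domRestrict]
    _ = ∫⁻ y, A.indicator ψ y ∂ν.withDensity (fun y => ENNReal.ofReal (Real.exp (φ y))) := by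
        rw [lintegral_withDensity_eq_lintegral_mul _ hφ.exp.ennreal_ofReal (hψ.indicator hA),
          hν _ (hφ.exp.ennreal_ofReal.mul (hψ.indicator hA))]
        simp_rw [Pi.mul_apply, hρψ]
    _ = ENNReal.ofReal lam * ∫⁻ x in A, ψ x ∂μ := by
        rw [heq, lintegral_smul_measure, lintegral_indicator hA, smul_eq_mul]
    _ = ∫⁻ x in A, ENNReal.ofReal (lam * Real.exp (-φ x)) ∂μ := by
        rw [← lintegral_const_mul _ hψ]
        simp_rw [ψ, ENNReal.ofReal_mul' (Real.exp_pos _).le]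

theorem jacobian_of_conformal_measure_general
    {M : Type*} [MetricSpace M] [CompactSpace M] [MeasurableSpace M] [BorelSpace M]
    (f : M → M) (hf : Continuous f) (φ : M → ℝ) (hφ : Continuous φ)
    (hfin : ∀ x : M, (f ⁻¹' {x}).Finite)
    (hloc : ∀ x : M, ∃ U : Set M, IsOpen U ∧ x ∈ U ∧ Set.InjOn f U ∧ IsOpen (f '' U))
    (μ : Measure M) [IsProbabilityMeasure μ]
    (lam : ℝ)
    (heigen : ∀ ψ : M → ℝ, Continuous ψ →
      ∫ x, (∑ y ∈ (hfin x).toFinset, Real.exp (φ y) * ψ y) ∂μ = lam * ∫ x, ψ x ∂μ) :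
    ∀ A : Set M, MeasurableSet A → Set.InjOn f A →
      μ (f '' A) = ∫⁻ x in A, ENNReal.ofReal (lam * Real.exp (-φ x)) ∂μ := by
  intro A hA hinjA
  obtain ⟨n, V, hdisj, hcover, hemb⟩ := hf.exists_fin_partition_measurableEmbedding fun x =>
    (hloc x).imp fun _ hU => ⟨hU.1, hU.2.1, hU.2.2.1⟩
  obtain ⟨ν, _, hν⟩ := exists_lintegral_eq_lintegral_tsum_preimage_singleton hdisj hcover hemb μ
  have heq := withDensity_exp_eq_smul_of_integral_transfer_eq hfin hφ
    (fun _ => measurable_tsum_preimage_singleton hdisj hcover hemb) hν heigen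
  exact measure_image_eq_of_withDensity_exp_eq_smul hφ.measurable hν heq hA
    (ContinuousOn.measurableEmbedding hA hf.continuousOn hinjA)

/-- The Jacobian of an eigenmeasure of the dual transfer operator associated with `(f, φ)`
and eigenvalue `λ` equals `λ e^{-φ}`. -/
theorem jacobian_of_conformal_measure
    {M : Type*} [MetricSpace M] [CompactSpace M] [MeasurableSpace M] [BorelSpace M]
    (f : M → M) (hf : Continuous f) (φ : M → ℝ) (hφ : Continuous φ)
    (hfin : ∀ x : M, (f ⁻¹' {x}).Finite)
    (d : ℕ) (hd : 1 ≤ d) (hdeg : ∀ x : M, (hfin x).toFinset.card = d)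
    (hloc : ∀ x : M, ∃ U : Set M, IsOpen U ∧ x ∈ U ∧ Set.InjOn f U ∧ IsOpen (f '' U))
    (μ : Measure M) [IsProbabilityMeasure μ]
    (lam : ℝ) (hlam : 0 < lam)
    (heigen : ∀ ψ : M → ℝ, Continuous ψ →
      ∫ x, (∑ y ∈ (hfin x).toFinset, Real.exp (φ y) * ψ y) ∂μ = lam * ∫ x, ψ x ∂μ) :
    ∀ A : Set M, MeasurableSet A → Set.InjOn f A →
      μ (f '' A) = ∫⁻ x in A, ENNReal.ofReal (lam * Real.exp (-φ x)) ∂μ :=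
  jacobian_of_conformal_measure_general f hf φ hφ hfin hloc μ lam heigen
end
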